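/- The complement U(K) of the coordinate subspace arrangement determined by a simplicial complex K deformation retracts onto the moment-angle complex Z_K; in particular U(K) and Z_K are homotopy equivalent. -/

import Mathlib

/-- The coordinate subspace `L_I ⊆ ℂ^m`: points vanishing on the index set `I`. -/
def coordSubspace {m : ℕ} (I : Finset (Fin m)) : Set (Fin m → ℂ) :=
  {z | ∀ i ∈ I, z i = 0}

/-- The complement `U(K)` of the coordinate subspace arrangement of a complex `K`. -/
def complementU {m : ℕ} (K : Set (Finset (Fin m))) : Set (Fin m → ℂ) :=
  {z | z ∉ ⋃ I ∈ {I : Finset (Fin m) | I ∉ K}, coordSubspace I}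

/-- The block `B_I = {z : |z_i| ≤ 1 for i ∈ I, |z_j| = 1 for j ∉ I}`. -/
def blockB {m : ℕ} (I : Finset (Fin m)) : Set (Fin m → ℂ) :=
  {z | (∀ i ∈ I, ‖z i‖ ≤ 1) ∧ ∀ j, j ∉ I → ‖z j‖ = 1}

/-- The moment-angle complex `Z_K = ⋃_{I face of K} B_I`. -/
def momentAngle {m : ℕ} (K : Set (Finset (Fin m))) : Set (Fin m → ℂ) :=
  ⋃ I ∈ {I : Finset (Fin m) | I ∈ K}, blockB I

open scoped NNReal

noncomputable section MomentAngleAux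

variable {m : ℕ}

/-- The finset of non-faces of `K`. -/
def nonfaces (K : Set (Finset (Fin m))) : Finset (Finset (Fin m)) :=
  @Finset.filter _ (fun I => I ∉ K) (Classical.decPred _) Finset.univ

lemma mem_nonfaces {K : Set (Finset (Fin m))} {I : Finset (Fin m)} :
    I ∈ nonfaces K ↔ I ∉ K := by
  simp [nonfaces]

/-- `ρ(z) = min(1, min over non-faces I of max_{i ∈ I} |z_i|)`. -/
def rho (K : Set (Finset (Fin m))) (z : Fin m → ℂ) : ℝ≥0 :=
  (nonfaces K).fold min 1 (fun I => I.sup fun i => ‖z i‖₊)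

lemma rho_le_one (K : Set (Finset (Fin m))) (z : Fin m → ℂ) : rho K z ≤ 1 :=
  (Finset.fold_min_le _).2 (Or.inl le_rfl)

lemma rho_le_sup {K : Set (Finset (Fin m))} {I : Finset (Fin m)} (hI : I ∉ K)
    (z : Fin m → ℂ) : rho K z ≤ I.sup fun i => ‖z i‖₊ :=
  (Finset.fold_min_le _).2 (Or.inr ⟨I, mem_nonfaces.2 hI, le_rfl⟩)

lemma mem_complementU_iff {K : Set (Finset (Fin m))} {z : Fin m → ℂ} :
    z ∈ complementU K ↔ ∀ I : Finset (Fin m), I ∉ K → ∃ i ∈ I, z i ≠ 0 := by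
  simp only [complementU, Set.mem_setOf_eq, Set.mem_iUnion, coordSubspace]
  constructor
  · intro h I hI
    by_contra hc
    push_neg at hc
    exact h ⟨I, hI, fun i hi => hc i hi⟩
  · rintro h ⟨I, hI, hz⟩
    obtain ⟨i, hi, hne⟩ := h I hI
    exact hne (hz i hi)

lemma rho_pos {K : Set (Finset (Fin m))} {z : Fin m → ℂ} (hz : z ∈ complementU K) :
    0 < rho K z := by
  refine (Finset.lt_fold_min _).2 ⟨zero_lt_one, fun I hI => ?_⟩
  obtain ⟨i, hi, hne⟩ := mem_complementU_iff.1 hz I (mem_nonfaces.1 hI)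
  exact lt_of_lt_of_le (by simpa using hne) (Finset.le_sup hi)

lemma continuous_rho (K : Set (Finset (Fin m))) :
    Continuous fun z : Fin m → ℂ => rho K z := by
  have hsup : ∀ I : Finset (Fin m),
      Continuous fun z : Fin m → ℂ => I.sup fun i => ‖z i‖₊ := by
    intro I
    induction I using Finset.induction_on with
    | empty => simp only [Finset.sup_empty]; exact continuous_const
    | @insert b t h2 ih2 =>
      simp only [Finset.sup_insert]
      exact Continuous.max ((continuous_nnnorm).comp (continuous_apply b)) ih2
  unfold rho
  induction (nonfaces K) using Finset.induction_on with
  | empty => simp only [Finset.fold_empty]; exact continuous_const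
  | @insert a s h ih =>
    simp only [Finset.fold_insert h]
    exact Continuous.min (hsup a) ih

/-- The denominator `max(|z_i|, ρ(z))`, as a real number. -/
def den (K : Set (Finset (Fin m))) (z : Fin m → ℂ) (i : Fin m) : ℝ :=
  max ‖z i‖ (rho K z : ℝ)

lemma den_pos {K : Set (Finset (Fin m))} {z : Fin m → ℂ} (hz : z ∈ complementU K)
    (i : Fin m) : 0 < den K z i :=
  lt_max_of_lt_right (by exact_mod_cast rho_pos hz)

lemma continuous_den (K : Set (Finset (Fin m))) (i : Fin m) :
    Continuous fun z : Fin m → ℂ => den K z i :=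
  Continuous.max ((continuous_norm).comp (continuous_apply i))
    (NNReal.continuous_coe.comp (continuous_rho K))

/-- The retraction `r(z)_i = z_i / max(|z_i|, ρ(z))`. -/
def retr (K : Set (Finset (Fin m))) (z : Fin m → ℂ) : Fin m → ℂ :=
  fun i => z i / (den K z i : ℂ)

/-- Scaling coordinates by nonzero complex numbers preserves membership in `U(K)`. -/
lemma div_mem_complementU {K : Set (Finset (Fin m))} {z : Fin m → ℂ}
    (hz : z ∈ complementU K) {c : Fin m → ℂ} (hc : ∀ i, c i ≠ 0) :
    (fun i => z i / c i) ∈ complementU K := by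
  rw [mem_complementU_iff]
  intro I hI
  obtain ⟨i, hi, hne⟩ := mem_complementU_iff.1 hz I hI
  exact ⟨i, hi, div_ne_zero hne (hc i)⟩

lemma retr_mem_complementU {K : Set (Finset (Fin m))} {z : Fin m → ℂ}
    (hz : z ∈ complementU K) : retr K z ∈ complementU K :=
  div_mem_complementU hz fun i =>
    Complex.ofReal_ne_zero.2 (ne_of_gt (den_pos hz i))

lemma abs_retr (K : Set (Finset (Fin m))) {z : Fin m → ℂ} (hz : z ∈ complementU K)
    (i : Fin m) : ‖retr K z i‖ = ‖z i‖ / den K z i := by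
  rw [retr, norm_div, Complex.norm_real, Real.norm_eq_abs, abs_of_pos (den_pos hz i)]

lemma retr_mem_momentAngle {K : Set (Finset (Fin m))} {z : Fin m → ℂ}
    (hz : z ∈ complementU K) : retr K z ∈ momentAngle K := by
  classical
  set F : Finset (Fin m) := Finset.univ.filter (fun i => ‖z i‖₊ < rho K z) with hF
  have hFK : F ∈ K := by
    by_contra hFK
    have h1 : rho K z ≤ F.sup fun i => ‖z i‖₊ := rho_le_sup hFK z
    have h2 : (F.sup fun i => ‖z i‖₊) < rho K z := by
      refine Finset.sup_lt_iff ?_ |>.2 fun i hi => ?_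
      · exact rho_pos hz
      · exact (Finset.mem_filter.1 hi).2
    exact absurd (h1.trans_lt h2) (lt_irrefl _)
  refine Set.mem_iUnion.2 ⟨F, Set.mem_iUnion.2 ⟨hFK, ?_, ?_⟩⟩
  · intro i _
    rw [abs_retr K hz i]
    refine div_le_one_of_le₀ (le_max_left _ _) (le_of_lt (den_pos hz i))
  · intro j hj
    have hj' : rho K z ≤ ‖z j‖₊ := by
      by_contra hc
      exact hj (Finset.mem_filter.2 ⟨Finset.mem_univ j, lt_of_not_ge hc⟩)
    have hj'' : (rho K z : ℝ) ≤ ‖z j‖ := by exact_mod_cast hj'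
    have hd : den K z j = ‖z j‖ := max_eq_left hj''
    have hzj : ‖z j‖ ≠ 0 :=
      ne_of_gt (lt_of_lt_of_le (by exact_mod_cast rho_pos hz) hj'')
    rw [abs_retr K hz j, hd, div_self hzj]

lemma momentAngle_subset_complementU {K : Set (Finset (Fin m))}
    (hK : ∀ σ ∈ K, ∀ τ, τ ⊆ σ → τ ∈ K) : momentAngle K ⊆ complementU K := by
  intro z hz
  obtain ⟨I, h1, hI, h2⟩ : ∃ I, (∀ i ∈ I, ‖z i‖ ≤ 1) ∧ I ∈ K ∧
      ∀ j, j ∉ I → ‖z j‖ = 1 := by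
    simpa [momentAngle, blockB] using hz
  rw [mem_complementU_iff]
  intro J hJ
  have : ¬ J ⊆ I := fun hsub => hJ (hK I hI J hsub)
  obtain ⟨j, hjJ, hjI⟩ := Finset.not_subset.1 this
  refine ⟨j, hjJ, fun h0 => ?_⟩
  have := h2 j hjI
  rw [h0] at this
  simp at this

lemma rho_eq_one_of_mem_momentAngle {K : Set (Finset (Fin m))}
    (hK : ∀ σ ∈ K, ∀ τ, τ ⊆ σ → τ ∈ K) {z : Fin m → ℂ} (hz : z ∈ momentAngle K) :
    rho K z = 1 := by
  obtain ⟨I, h1, hI, h2⟩ : ∃ I, (∀ i ∈ I, ‖z i‖ ≤ 1) ∧ I ∈ K ∧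
      ∀ j, j ∉ I → ‖z j‖ = 1 := by
    simpa [momentAngle, blockB] using hz
  refine le_antisymm (rho_le_one K z) ?_
  refine (Finset.le_fold_min _).2 ⟨le_rfl, fun J hJ => ?_⟩
  have : ¬ J ⊆ I := fun hsub => (mem_nonfaces.1 hJ) (hK I hI J hsub)
  obtain ⟨j, hjJ, hjI⟩ := Finset.not_subset.1 this
  have habs : ‖z j‖₊ = 1 := by
    have := h2 j hjI
    ext
    simpa using this
  calc (1 : ℝ≥0) = ‖z j‖₊ := habs.symm
    _ ≤ J.sup fun i => ‖z i‖₊ := Finset.le_sup (f := fun i => ‖z i‖₊) hjJ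

lemma retr_eq_self_of_mem_momentAngle {K : Set (Finset (Fin m))}
    (hK : ∀ σ ∈ K, ∀ τ, τ ⊆ σ → τ ∈ K) {z : Fin m → ℂ} (hz : z ∈ momentAngle K) :
    retr K z = z := by
  obtain ⟨I, h1, hI, h2⟩ : ∃ I, (∀ i ∈ I, ‖z i‖ ≤ 1) ∧ I ∈ K ∧
      ∀ j, j ∉ I → ‖z j‖ = 1 := by
    simpa [momentAngle, blockB] using hz
  funext i
  have habs : ‖z i‖ ≤ 1 := by
    by_cases hi : i ∈ I
    · exact h1 i hi
    · exact le_of_eq (h2 i hi)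
  have hden : den K z i = 1 := by
    rw [den, rho_eq_one_of_mem_momentAngle hK hz]
    simpa using habs
  simp [retr, hden]

end MomentAngleAux

lemma continuous_retr_restrict (K : Set (Finset (Fin m))) :
    Continuous fun x : complementU K => retr K (x : Fin m → ℂ) := by
  refine continuous_pi fun i => Continuous.div ?_ ?_ ?_
  · exact (continuous_apply i).comp continuous_subtype_val
  · exact Complex.continuous_ofReal.comp ((continuous_den K i).comp continuous_subtype_val)
  · exact fun x => Complex.ofReal_ne_zero.2 (ne_of_gt (den_pos x.2 i))

lemma dent_pos {t d : ℝ} (ht0 : 0 ≤ t) (ht1 : t ≤ 1) (hd : 0 < d) :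
    0 < (1 - t) * d + t := by
  rcases eq_or_lt_of_le ht0 with h | h
  · simpa [← h] using hd
  · exact add_pos_of_nonneg_of_pos (mul_nonneg (by linarith) hd.le) h


/-- `U(K)` deformation retracts onto the moment-angle complex `Z_K`; in
particular `U(K)` and `Z_K` are homotopy equivalent. -/
theorem complementU_deformationRetract_momentAngle {m : ℕ} (K : Set (Finset (Fin m)))
    (hK : ∀ σ ∈ K, ∀ τ, τ ⊆ σ → τ ∈ K) (hKne : ∅ ∈ K) :
    (∃ r : C(complementU K, complementU K),
      (∀ x : complementU K, (r x : Fin m → ℂ) ∈ momentAngle K) ∧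
      (∀ x : complementU K, (x : Fin m → ℂ) ∈ momentAngle K → r x = x) ∧
      ContinuousMap.Homotopic r (ContinuousMap.id _)) ∧
    Nonempty (ContinuousMap.HomotopyEquiv (complementU K) (momentAngle K)) := by
  classical
  set r : C(complementU K, complementU K) :=
    ⟨fun x => ⟨retr K x, retr_mem_complementU x.2⟩,
      (continuous_retr_restrict K).subtype_mk _⟩ with hrdef
  have H : ContinuousMap.Homotopy r (ContinuousMap.id _) :=
  { toFun := fun p => ⟨fun i => (p.2 : Fin m → ℂ) i /
        ((((1 - (p.1 : ℝ)) * den K p.2 i + (p.1 : ℝ) : ℝ) : ℂ)),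
      div_mem_complementU p.2.2 (fun i => Complex.ofReal_ne_zero.2
        (ne_of_gt (dent_pos p.1.2.1 p.1.2.2 (den_pos p.2.2 i))))⟩
    continuous_toFun := by
      refine Continuous.subtype_mk (continuous_pi fun i => Continuous.div ?_ ?_ ?_) _
      · exact (continuous_apply i).comp (continuous_subtype_val.comp continuous_snd)
      · refine Complex.continuous_ofReal.comp ?_
        exact ((continuous_const.sub (continuous_subtype_val.comp continuous_fst)).mul
          ((continuous_den K i).comp (continuous_subtype_val.comp continuous_snd))).add
          (continuous_subtype_val.comp continuous_fst)
      · exact fun p => Complex.ofReal_ne_zero.2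
          (ne_of_gt (dent_pos p.1.2.1 p.1.2.2 (den_pos p.2.2 i)))
    map_zero_left := fun x => Subtype.ext (funext fun i => by
      simp [hrdef, retr])
    map_one_left := fun x => Subtype.ext (funext fun i => by
      simp) }
  refine ⟨⟨r, fun x => retr_mem_momentAngle x.2,
      fun x hx => Subtype.ext (retr_eq_self_of_mem_momentAngle hK hx), ⟨H⟩⟩, ?_⟩
  set f : C(complementU K, momentAngle K) :=
    ⟨fun x => ⟨retr K x, retr_mem_momentAngle x.2⟩,
      (continuous_retr_restrict K).subtype_mk _⟩ with hfdef
  set g : C(momentAngle K, complementU K) :=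
    ⟨fun y => ⟨y, momentAngle_subset_complementU hK y.2⟩,
      continuous_subtype_val.subtype_mk _⟩ with hgdef
  refine ⟨⟨f, g, ?_, ?_⟩⟩
  · have hgf : g.comp f = r := ContinuousMap.ext fun x => Subtype.ext rfl
    rw [hgf]
    exact ⟨H⟩
  · have hfg : f.comp g = ContinuousMap.id _ := ContinuousMap.ext fun y =>
      Subtype.ext (retr_eq_self_of_mem_momentAngle hK y.2)
    rw [hfg]
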